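/- arXiv:1411.6779 — 4 statements merged into one kernel-verified Lean document; each statement's English description precedes it below -/
import Mathlib

section
/- In a p-uniformly convex space X with parameter c, every firmly nonexpansive mapping T : C → X with Fix(T) ≠ ∅ satisfies property (P₁) with exponent l = p and constant β = c/2: for all x ∈ C and all u ∈ Fix(T), d(Tx, u)^p ≤ d(x, u)^p − (c/2)·d(Tx, x)^p. -/
open Filter Topology Metric Set

/-- A (chosen) geodesic bicombing witnessing that `X` is a geodesic space:
`geo x y t` is the point at parameter fraction `t ∈ [0,1]` on a geodesic from `x` to `y`. -/
structure Geodesic (X : Type*) [MetricSpace X] where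
  geo : X → X → ℝ → X
  geo_zero : ∀ x y, geo x y 0 = x
  geo_one : ∀ x y, geo x y 1 = y
  geo_dist : ∀ x y : X, ∀ s ∈ Set.Icc (0:ℝ) 1, ∀ t ∈ Set.Icc (0:ℝ) 1,
    dist (geo x y s) (geo x y t) = |s - t| * dist x y

/-- `X` is `p`-uniformly convex with parameter `c` (w.r.t. the geodesic bicombing `G`). -/
def PUnifConvex {X : Type*} [MetricSpace X] (G : Geodesic X) (p c : ℝ) : Prop :=
  ∀ x y z : X, ∀ t ∈ Set.Icc (0:ℝ) 1,
    dist z (G.geo x y t) ^ p ≤ (1 - t) * dist z x ^ p + t * dist z y ^ p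
      - c / 2 * (t * (1 - t)) * dist x y ^ p

lemma geo_self {X : Type*} [MetricSpace X] (G : Geodesic X) (u : X) (t : ℝ)
    (ht : t ∈ Set.Icc (0:ℝ) 1) : G.geo u u t = u := by
  have h := G.geo_dist u u t ht 0 ⟨le_refl 0, zero_le_one⟩
  rw [G.geo_zero, dist_self, mul_zero] at h
  exact eq_of_dist_eq_zero h

/-- In a `p`-uniformly convex space with parameter `c`, every firmly nonexpansive mapping
`T : C → X` with a fixed point satisfies property (P₁) with `l = p` and `β = c/2`. -/
theorem firmly_nonexpansive_prop_P1 {X : Type*} [MetricSpace X]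
    (G : Geodesic X) (p c : ℝ) (hp : 1 < p) (hc : 0 < c)
    (hpc : PUnifConvex G p c)
    (C : Set X) (hC : C.Nonempty) (T : X → X)
    (hT : ∀ x ∈ C, ∀ y ∈ C, ∀ lam ∈ Set.Ico (0:ℝ) 1,
      dist (T x) (T y) ≤ dist (G.geo x (T x) lam) (G.geo y (T y) lam))
    (hfix : ∃ u ∈ C, T u = u) :
    ∀ x ∈ C, ∀ u ∈ C, T u = u →
      dist (T x) u ^ p ≤ dist x u ^ p - c / 2 * dist (T x) x ^ p := by
  intro x hx u hu hTu
  set a := dist (T x) u ^ p with ha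
  set b := dist x u ^ p with hb
  set k := c / 2 * dist (T x) x ^ p with hk
  have hk0 : 0 ≤ k := by
    apply mul_nonneg (by linarith)
    exact Real.rpow_nonneg dist_nonneg _
  -- step: for all lam in [0,1), a + lam * k ≤ b
  have key : ∀ lam ∈ Set.Ico (0:ℝ) 1, a + lam * k ≤ b := by
    intro lam hlam
    have hIcc : lam ∈ Set.Icc (0:ℝ) 1 := ⟨hlam.1, hlam.2.le⟩
    have h1 : dist (T x) u ≤ dist u (G.geo x (T x) lam) := by
      have h := hT x hx u hu lam hlam
      rw [hTu, geo_self G u lam hIcc] at h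
      rw [dist_comm u (G.geo x (T x) lam)]
      exact h
    have h2 : dist (T x) u ^ p ≤ dist u (G.geo x (T x) lam) ^ p :=
      Real.rpow_le_rpow dist_nonneg h1 (by linarith)
    have h3 := hpc x (T x) u lam hIcc
    have h4 : a ≤ (1 - lam) * dist u x ^ p + lam * dist u (T x) ^ p
        - c / 2 * (lam * (1 - lam)) * dist x (T x) ^ p := le_trans h2 h3
    rw [dist_comm u x, dist_comm u (T x), dist_comm x (T x)] at h4
    rw [← hb, ← ha] at h4
    -- (1 - lam) * a ≤ (1 - lam) * b - (1-lam) * lam * k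
    have h5 : (1 - lam) * (a + lam * k) ≤ (1 - lam) * b := by
      rw [hk]; ring_nf; ring_nf at h4; linarith
    have hpos : 0 < 1 - lam := by linarith [hlam.2]
    exact le_of_mul_le_mul_left (by linarith [h5]) hpos
  -- pass to the limit lam → 1⁻
  have ht : Tendsto (fun l : ℝ => a + l * k) (𝓝[<] (1:ℝ)) (𝓝 (a + 1 * k)) :=
    ((continuous_const.add (continuous_id.mul continuous_const)).tendsto 1).mono_left
      nhdsWithin_le_nhds
  have hev : ∀ᶠ l in 𝓝[<] (1:ℝ), a + l * k ≤ b := by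
    filter_upwards [Ioo_mem_nhdsLT_of_mem (show (1:ℝ) ∈ Set.Ioc 0 1 by norm_num)] with l hl
    exact key l ⟨hl.1.le, hl.2⟩
  have : a + 1 * k ≤ b :=
    le_of_tendsto ht hev
  linarith
end

section
/- Let (X,d) be a metric space and T₁, …, T_r : X → X mappings each satisfying property (P₁). If ⋂_{i=1}^r Fix(T_i) ≠ ∅, then ⋂_{i=1}^r Fix(T_i) = Fix(T₁ ∘ ⋯ ∘ T_r). -/
/-!
Each map satisfying (P₁) is strictly quasi-nonexpansive with respect to a common fixed point `u`:
it moves every non-fixed point strictly closer to `u`. If `f (g x) = x` with `g x ≠ x`, then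
`d(x, u) = d(f (g x), u) ≤ d(g x, u) < d(x, u)`, so a fixed point of a composition of such maps is
fixed by every factor.
-/

open Set

/-- The composition `T 0 ∘ T 1 ∘ ⋯ ∘ T (r-1)` of a finite family of self-maps. -/
def compFam {X : Type*} {r : ℕ} (T : Fin r → X → X) : X → X :=
  (List.ofFn T).foldr (· ∘ ·) id

section

open Function

variable {X : Type*} [MetricSpace X]

def StrictlyQuasiNonexpansiveAt (f : X → X) (u : X) : Prop :=
  ∀ x, ¬IsFixedPt f x → dist (f x) u < dist x u

namespace StrictlyQuasiNonexpansiveAt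

variable {f g : X → X} {u : X}

theorem of_rpow_le {l β : ℝ} (hl : 0 < l) (hβ : 0 < β)
    (h : ∀ x, dist (f x) u ^ l ≤ dist x u ^ l - β * dist (f x) x ^ l) :
    StrictlyQuasiNonexpansiveAt f u := by
  intro x hx
  have hmove : 0 < β * dist (f x) x ^ l :=
    mul_pos hβ (Real.rpow_pos_of_pos (dist_pos.mpr hx) l)
  have hpow : dist (f x) u ^ l < dist x u ^ l := by linarith [h x]
  exact (Real.rpow_lt_rpow_iff dist_nonneg dist_nonneg hl).mp hpow

theorem dist_le (hf : StrictlyQuasiNonexpansiveAt f u) (x : X) : dist (f x) u ≤ dist x u := by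
  by_cases hx : IsFixedPt f x
  · rw [hx.eq]
  · exact (hf x hx).le

theorem isFixedPt_comp_iff (hf : StrictlyQuasiNonexpansiveAt f u)
    (hg : StrictlyQuasiNonexpansiveAt g u) {x : X} :
    IsFixedPt (f ∘ g) x ↔ IsFixedPt f x ∧ IsFixedPt g x := by
  refine ⟨fun hfg => ?_, fun ⟨hfx, hgx⟩ => hfx.comp hgx⟩
  have hgx : IsFixedPt g x := by
    by_contra hgx
    exact lt_irrefl (dist x u) <| calc
      dist x u = dist (f (g x)) u := congrArg (dist · u) hfg.symm
      _ ≤ dist (g x) u := hf.dist_le (g x)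
      _ < dist x u := hg x hgx
  exact ⟨by simpa [IsFixedPt, hgx.eq] using hfg, hgx⟩

theorem comp (hf : StrictlyQuasiNonexpansiveAt f u) (hg : StrictlyQuasiNonexpansiveAt g u) :
    StrictlyQuasiNonexpansiveAt (f ∘ g) u := by
  intro x hx
  by_cases hgx : IsFixedPt g x
  · have hfx : ¬IsFixedPt f x := fun hfx => hx (hfx.comp hgx)
    simpa [hgx.eq] using hf x hfx
  · exact (hf.dist_le (g x)).trans_lt (hg x hgx)

theorem foldr_comp {L : List (X → X)} (hL : ∀ f ∈ L, StrictlyQuasiNonexpansiveAt f u) :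
    StrictlyQuasiNonexpansiveAt (L.foldr (· ∘ ·) id) u := by
  induction L with
  | nil => exact fun x hx => absurd rfl hx
  | cons f L ih =>
    simp only [List.forall_mem_cons] at hL
    exact hL.1.comp (ih hL.2)

theorem isFixedPt_foldr_comp_iff {L : List (X → X)}
    (hL : ∀ f ∈ L, StrictlyQuasiNonexpansiveAt f u) {x : X} :
    IsFixedPt (L.foldr (· ∘ ·) id) x ↔ ∀ f ∈ L, IsFixedPt f x := by
  induction L with
  | nil => simp [IsFixedPt]
  | cons f L ih =>
    simp only [List.forall_mem_cons] at hL ⊢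
    rw [List.foldr_cons, hL.1.isFixedPt_comp_iff (foldr_comp hL.2), ih hL.2]

end StrictlyQuasiNonexpansiveAt

end

/-- If `T₁, …, T_r` satisfy property (P₁) and have a common fixed point, then
`⋂ Fix(T_i) = Fix(T₁ ∘ ⋯ ∘ T_r)`. -/
theorem fixed_points_of_composition {X : Type*} [MetricSpace X]
    {r : ℕ} (T : Fin r → X → X)
    (hP1 : ∀ i : Fin r, ∃ l > (0:ℝ), ∃ β > (0:ℝ), (∃ u, T i u = u) ∧
      ∀ x u : X, T i u = u →
        dist (T i x) u ^ l ≤ dist x u ^ l - β * dist (T i x) x ^ l)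
    (hcommon : ∃ u : X, ∀ i, T i u = u) :
    {x : X | ∀ i, T i x = x} = {x : X | compFam T x = x} := by
  obtain ⟨u, hu⟩ := hcommon
  have hT : ∀ i, StrictlyQuasiNonexpansiveAt (T i) u := fun i => by
    obtain ⟨l, hl, β, hβ, -, hP⟩ := hP1 i
    exact .of_rpow_le hl hβ fun x => hP x u (hu i)
  ext x
  have hfix := StrictlyQuasiNonexpansiveAt.isFixedPt_foldr_comp_iff
    (List.forall_mem_ofFn_iff.mpr hT) (x := x)
  simp only [Function.IsFixedPt, List.forall_mem_ofFn_iff] at hfix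
  exact hfix.symm
end

section
/- The mapping T : [−1/4, 1/3] → ℝ, given by T(x) = 2x², satisfies property (P₁) with l = 2 and β = 1/3 (it has fixed point 0 and d(Tx,0)^2 ≤ d(x,0)^2 − (1/3)d(x,Tx)^2 for all x in the domain), but it does not satisfy property (P₂): the inequality 2·d(Tx,Ty)^2 ≤ d(x,Ty)^2 + d(y,Tx)^2 − d(x,Tx)^2 − d(y,Ty)^2 fails for x = −1/4, y = 0. -/
/-- The map `T x = 2x²` on `[-1/4, 1/3]` satisfies property (P₁) with `l = 2`, `β = 1/3`
(with fixed point `0`), but property (P₂) fails for `x = -1/4`, `y = 0`. -/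
theorem example_P1_not_P2 :
    let T : ℝ → ℝ := fun x => 2 * x ^ 2
    T 0 = 0 ∧
    (∀ x ∈ Set.Icc (-(1/4) : ℝ) (1/3),
      dist (T x) 0 ^ 2 ≤ dist x 0 ^ 2 - (1/3) * dist x (T x) ^ 2) ∧
    ¬ (2 * dist (T (-(1/4))) (T 0) ^ 2 ≤
        dist (-(1/4) : ℝ) (T 0) ^ 2 + dist (0:ℝ) (T (-(1/4))) ^ 2
          - dist (-(1/4) : ℝ) (T (-(1/4))) ^ 2 - dist (0:ℝ) (T 0) ^ 2) := by
  refine ⟨by norm_num, ?_, ?_⟩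
  · intro x hx
    obtain ⟨h1, h2⟩ := hx
    simp only [Real.dist_eq, sub_zero]
    rw [sq_abs, sq_abs, sq_abs]
    nlinarith [sq_nonneg x, sq_nonneg (x - 1/3), sq_nonneg (x + 1/4), mul_nonneg (mul_nonneg (sub_nonneg.2 h2) (sub_nonneg.2 h2)) (sq_nonneg x)]
  · simp only [Real.dist_eq]
    norm_num
end

section
/- Let T₁, …, T_r : X → X satisfy property (P₁) on a metric space X with a common fixed point. Then T = T₁ ∘ ⋯ ∘ T_r is asymptotically regular: for every x₀ ∈ X, lim_{k→∞} d(T^k x₀, T^{k+1} x₀) = 0. -/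
/-!
By (P₁), a map `T i` moves `x` by at most `((d(x,u)^l - d(T i x,u)^l)/β)^(1/l)` and does not
increase the distance to the common fixed point `u`. Along one sweep of the composition `T` the
intermediate distances to `u` lie between `d(T x, u)` and `d(x, u)`, so by the triangle inequality
`d(x, T x)` is bounded by a finite sum of such terms with `d(x, u)` and `d(T x, u)` in place of the
intermediate distances. On the orbit `T^k x₀` the distances to `u` decrease to a limit, so each
term, and hence `d(T^k x₀, T^{k+1} x₀)`, tends to `0`.
-/

open Filter Topology

theorem compFam_zero {X : Type*} (T : Fin 0 → X → X) : compFam T = id := rfl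

theorem compFam_succ {r : ℕ} {X : Type*} (T : Fin (r + 1) → X → X) :
    compFam T = T 0 ∘ compFam (fun i => T i.succ) := by
  simp [compFam, List.ofFn_succ]

section P1

variable {X : Type*} [MetricSpace X]

def SatisfiesP1 (f : X → X) (u : X) (l β : ℝ) : Prop :=
  ∀ x, dist (f x) u ^ l ≤ dist x u ^ l - β * dist (f x) x ^ l

namespace SatisfiesP1

variable {f : X → X} {u : X} {l β : ℝ}

theorem dist_le (hf : SatisfiesP1 f u l β) (hl : 0 < l) (hβ : 0 ≤ β) (x : X) :
    dist (f x) u ≤ dist x u := by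
  have hmove : 0 ≤ β * dist (f x) x ^ l := mul_nonneg hβ (Real.rpow_nonneg dist_nonneg _)
  have hpow : dist (f x) u ^ l ≤ dist x u ^ l := by linarith [hf x]
  exact (Real.rpow_le_rpow_iff dist_nonneg dist_nonneg hl).mp hpow

theorem dist_self_le (hf : SatisfiesP1 f u l β) (hl : 0 < l) (hβ : 0 < β) {x : X} {a c : ℝ}
    (ha : dist x u ≤ a) (hc₀ : 0 ≤ c) (hc : c ≤ dist (f x) u) :
    dist (f x) x ≤ ((a ^ l - c ^ l) / β) ^ (1 / l) := by
  have ha' : dist x u ^ l ≤ a ^ l := Real.rpow_le_rpow dist_nonneg ha hl.le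
  have hc' : c ^ l ≤ dist (f x) u ^ l := Real.rpow_le_rpow hc₀ hc hl.le
  have hmove : dist (f x) x ^ l ≤ (a ^ l - c ^ l) / β := by
    rw [le_div_iff₀' hβ]
    linarith [hf x]
  calc dist (f x) x = (dist (f x) x ^ l) ^ (1 / l) := by
        rw [one_div, Real.rpow_rpow_inv dist_nonneg hl.ne']
    _ ≤ ((a ^ l - c ^ l) / β) ^ (1 / l) :=
        Real.rpow_le_rpow (by positivity) hmove (one_div_pos.mpr hl).le

end SatisfiesP1

theorem dist_compFam_le {r : ℕ} {T : Fin r → X → X} {u : X}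
    (hT : ∀ i x, dist (T i x) u ≤ dist x u) (x : X) : dist (compFam T x) u ≤ dist x u := by
  induction r generalizing x with
  | zero => rfl
  | succ r ih =>
    rw [compFam_succ]
    exact (hT 0 _).trans (ih (fun i => hT i.succ) x)

theorem dist_self_compFam_le {r : ℕ} {T : Fin r → X → X} {u : X} {l β : Fin r → ℝ}
    (hl : ∀ i, 0 < l i) (hβ : ∀ i, 0 < β i) (hT : ∀ i, SatisfiesP1 (T i) u (l i) (β i))
    {x : X} {a c : ℝ} (ha : dist x u ≤ a) (hc₀ : 0 ≤ c) (hc : c ≤ dist (compFam T x) u) :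
    dist x (compFam T x) ≤ ∑ i, ((a ^ l i - c ^ l i) / β i) ^ (1 / l i) := by
  induction r generalizing x with
  | zero => simp [compFam_zero]
  | succ r ih =>
    rw [compFam_succ] at hc ⊢
    set y := compFam (fun i => T i.succ) x
    have hyx : dist y u ≤ dist x u :=
      dist_compFam_le (fun i => (hT i.succ).dist_le (hl i.succ) (hβ i.succ).le) x
    have hcy : c ≤ dist y u := hc.trans ((hT 0).dist_le (hl 0) (hβ 0).le y)
    rw [Fin.sum_univ_succ]
    calc dist x (T 0 y) ≤ dist x y + dist (T 0 y) y := dist_triangle_right _ _ _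
      _ ≤ _ := by
        rw [add_comm]
        gcongr
        · exact (hT 0).dist_self_le (hl 0) (hβ 0) (hyx.trans ha) hc₀ hc
        · exact ih (fun i => hl i.succ) (fun i => hβ i.succ) (fun i => hT i.succ) ha hcy

theorem tendsto_rpow_sub_rpow_succ_div_rpow_inv {b : ℕ → ℝ} {L l : ℝ}
    (hb : Tendsto b atTop (𝓝 L)) (hl : 0 < l) (β : ℝ) :
    Tendsto (fun k => ((b k ^ l - b (k + 1) ^ l) / β) ^ (1 / l)) atTop (𝓝 0) := by
  have hpow : Tendsto (fun k => b k ^ l) atTop (𝓝 (L ^ l)) :=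
    (Real.continuousAt_rpow_const L l (Or.inr hl.le)).tendsto.comp hb
  have hgap : Tendsto (fun k => (b k ^ l - b (k + 1) ^ l) / β) atTop (𝓝 0) := by
    simpa using (hpow.sub (hpow.comp (tendsto_add_atTop_nat 1))).div_const β
  have hroot : ContinuousAt (fun t : ℝ => t ^ (1 / l)) 0 :=
    Real.continuousAt_rpow_const 0 _ (Or.inr (one_div_pos.mpr hl).le)
  have h := hroot.tendsto.comp hgap
  rwa [Real.zero_rpow (one_div_pos.mpr hl).ne'] at h

end P1

/-- The composition of finitely many mappings satisfying property (P₁) with a common fixed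
point is asymptotically regular. -/
theorem composition_asymptotically_regular {X : Type*} [MetricSpace X]
    {r : ℕ} (T : Fin r → X → X)
    (hP1 : ∀ i : Fin r, ∃ l > (0:ℝ), ∃ β > (0:ℝ), (∃ w, T i w = w) ∧
      ∀ x w : X, T i w = w →
        dist (T i x) w ^ l ≤ dist x w ^ l - β * dist (T i x) x ^ l)
    (hcommon : ∃ u : X, ∀ i, T i u = u) (x₀ : X) :
    Tendsto (fun k => dist ((compFam T)^[k] x₀) ((compFam T)^[k + 1] x₀))
      atTop (𝓝 0) := by
  obtain ⟨u, hu⟩ := hcommon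
  choose l hl β hβ _ hP1 using hP1
  have hT : ∀ i, SatisfiesP1 (T i) u (l i) (β i) := fun i x => hP1 i x u (hu i)
  set b : ℕ → ℝ := fun k => dist ((compFam T)^[k] x₀) u
  have hb_anti : Antitone b := antitone_nat_of_succ_le fun k => by
    simpa only [b, Function.iterate_succ_apply'] using
      dist_compFam_le (fun i => (hT i).dist_le (hl i) (hβ i).le) _
  have hb : Tendsto b atTop (𝓝 (⨅ k, b k)) :=
    tendsto_atTop_ciInf hb_anti ⟨0, by rintro _ ⟨k, rfl⟩; exact dist_nonneg⟩
  have hsum := tendsto_finsetSum Finset.univ fun i _ =>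
    tendsto_rpow_sub_rpow_succ_div_rpow_inv hb (hl i) (β i)
  rw [Finset.sum_const_zero] at hsum
  refine squeeze_zero (fun k => dist_nonneg) (fun k => ?_) hsum
  rw [Function.iterate_succ_apply']
  exact dist_self_compFam_le hl hβ hT le_rfl dist_nonneg
    (by simp only [b, Function.iterate_succ_apply', le_refl])
end
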